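/- Let U₁, U₂ ∈ ℂ^{N×N} be unitary matrices and let F(ψ) = |⟨U₁ψ, U₂ψ⟩|² for ψ on the unit sphere of ℂ^N. Then the variance of F under the uniform probability measure 𝒥 satisfies ∫ F(ψ)² d𝒥(ψ) − ( ∫ F(ψ) d𝒥(ψ) )² ≤ 2 · ‖U₁ − U₂‖_{S₂}². -/

import Mathlib

open Finset Matrix MeasureTheory

/-- The normalized Schatten 2-norm `‖A‖_{S₂} = √((Σ_i σ_i²)/N) = √(Re(Tr(A A†))/N)`
of a matrix `A ∈ ℂ^{N×M}`. -/
noncomputable def schattenTwo {N M : ℕ} (A : Matrix (Fin N) (Fin M) ℂ) : ℝ :=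
  Real.sqrt ((A * Aᴴ).trace.re / N)


/-- negate the `i`-th coordinate -/
noncomputable def negC {N : ℕ} (i : Fin N) :
    EuclideanSpace ℂ (Fin N) ≃ₗᵢ[ℂ] EuclideanSpace ℂ (Fin N) where
  toFun ψ := WithLp.toLp 2 (fun j => if j = i then -ψ j else ψ j)
  invFun ψ := WithLp.toLp 2 (fun j => if j = i then -ψ j else ψ j)
  map_add' x y := by ext j; by_cases h : j = i <;> simp [h]; ring
  map_smul' c x := by ext j; by_cases h : j = i <;> simp [h]
  left_inv x := by ext j; by_cases h : j = i <;> simp [h]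
  right_inv x := by ext j; by_cases h : j = i <;> simp [h]
  norm_map' x := by
    simp only [EuclideanSpace.norm_eq]
    congr 1
    refine Finset.sum_congr rfl fun j _ => ?_
    by_cases h : j = i <;> simp [h]

@[simp] lemma negC_apply {N : ℕ} (i : Fin N) (ψ : EuclideanSpace ℂ (Fin N)) (j : Fin N) :
    negC i ψ j = if j = i then -ψ j else ψ j := rfl

/-- permute coordinates -/
noncomputable def permC {N : ℕ} (e : Equiv.Perm (Fin N)) :
    EuclideanSpace ℂ (Fin N) ≃ₗᵢ[ℂ] EuclideanSpace ℂ (Fin N) where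
  toFun ψ := WithLp.toLp 2 (fun j => ψ (e j))
  invFun ψ := WithLp.toLp 2 (fun j => ψ (e.symm j))
  map_add' x y := by ext j; simp
  map_smul' c x := by ext j; simp
  left_inv x := by ext j; show x (e ((Equiv.symm e) j)) = x j; rw [Equiv.apply_symm_apply]
  right_inv x := by ext j; show x ((Equiv.symm e) (e j)) = x j; rw [Equiv.symm_apply_apply]
  norm_map' x := by
    simp only [EuclideanSpace.norm_eq]
    congr 1
    exact Equiv.sum_comp e (fun j => ‖x j‖ ^ 2)

@[simp] lemma permC_apply {N : ℕ} (e : Equiv.Perm (Fin N)) (ψ : EuclideanSpace ℂ (Fin N))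
    (j : Fin N) : permC e ψ j = ψ (e j) := rfl

lemma integral_comp_iso {N : ℕ} [MeasurableSpace (EuclideanSpace ℂ (Fin N))]
    [BorelSpace (EuclideanSpace ℂ (Fin N))]
    (𝒥 : Measure (EuclideanSpace ℂ (Fin N)))
    (hinv : ∀ R : EuclideanSpace ℂ (Fin N) ≃ₗᵢ[ℂ] EuclideanSpace ℂ (Fin N),
      Measure.map R 𝒥 = 𝒥)
    {G : Type*} [NormedAddCommGroup G] [NormedSpace ℝ G]
    (R : EuclideanSpace ℂ (Fin N) ≃ₗᵢ[ℂ] EuclideanSpace ℂ (Fin N))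
    (f : EuclideanSpace ℂ (Fin N) → G) (hf : AEStronglyMeasurable f 𝒥) :
    ∫ ψ, f (R ψ) ∂𝒥 = ∫ ψ, f ψ ∂𝒥 := by
  conv_rhs => rw [← hinv R]
  rw [integral_map R.continuous.measurable.aemeasurable]
  rw [hinv R]; exact hf

lemma conj_mul_cont {N : ℕ} (i k : Fin N) :
    Continuous fun ψ : EuclideanSpace ℂ (Fin N) => (starRingEnd ℂ) (ψ i) * ψ k := by
  have h1 : Continuous fun ψ : EuclideanSpace ℂ (Fin N) => ψ i := by fun_prop
  have h2 : Continuous fun ψ : EuclideanSpace ℂ (Fin N) => ψ k := by fun_prop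
  exact (continuous_star.comp h1).mul h2

section moments
variable {N : ℕ} [MeasurableSpace (EuclideanSpace ℂ (Fin N))]
  [BorelSpace (EuclideanSpace ℂ (Fin N))]
  (𝒥 : Measure (EuclideanSpace ℂ (Fin N))) [IsProbabilityMeasure 𝒥]

lemma coord_meas (i : Fin N) : Measurable fun ψ : EuclideanSpace ℂ (Fin N) => ψ i :=
  (by fun_prop : Continuous fun ψ : EuclideanSpace ℂ (Fin N) => ψ i).measurable

lemma coord_bound (hsphere : ∀ᵐ ψ ∂𝒥, ‖ψ‖ = 1) :
    ∀ᵐ ψ ∂𝒥, ∀ i, ‖ψ i‖ ≤ 1 := by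
  filter_upwards [hsphere] with ψ hψ i
  have h1 : ‖ψ i‖ ^ 2 ≤ ‖ψ‖ ^ 2 := by
    rw [EuclideanSpace.norm_eq, Real.sq_sqrt (by positivity)]
    have := Finset.single_le_sum (f := fun j => ‖ψ j‖ ^ 2)
      (fun j _ => by positivity) (Finset.mem_univ i)
    simpa using this
  rw [hψ] at h1
  nlinarith [norm_nonneg (ψ i)]

lemma mom_integrable (hsphere : ∀ᵐ ψ ∂𝒥, ‖ψ‖ = 1) (i k : Fin N) :
    Integrable (fun ψ : EuclideanSpace ℂ (Fin N) =>
      (starRingEnd ℂ) (ψ i) * ψ k) 𝒥 := by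
  refine Integrable.mono' (integrable_const (1 : ℝ))
    ((conj_mul_cont i k).measurable.aestronglyMeasurable) ?_
  filter_upwards [coord_bound 𝒥 hsphere] with ψ hψ
  have := mul_le_one₀ (hψ i) (norm_nonneg _) (hψ k)
  simpa [norm_mul] using this

lemma mom_offdiag
    (hinv : ∀ R : EuclideanSpace ℂ (Fin N) ≃ₗᵢ[ℂ] EuclideanSpace ℂ (Fin N),
      Measure.map R 𝒥 = 𝒥) (i k : Fin N) (h : i ≠ k) :
    ∫ ψ, (starRingEnd ℂ) (ψ i) * ψ k ∂𝒥 = 0 := by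
  have hm : AEStronglyMeasurable (fun ψ : EuclideanSpace ℂ (Fin N) =>
      (starRingEnd ℂ) (ψ i) * ψ k) 𝒥 :=
    (conj_mul_cont i k).measurable.aestronglyMeasurable
  have key := integral_comp_iso 𝒥 hinv (negC i)
    (fun ψ => (starRingEnd ℂ) (ψ i) * ψ k) hm
  have hpt : ∀ ψ : EuclideanSpace ℂ (Fin N),
      (starRingEnd ℂ) ((negC i ψ) i) * (negC i ψ) k
        = -((starRingEnd ℂ) (ψ i) * ψ k) := by
    intro ψ
    simp [negC_apply, Ne.symm h]
  rw [show (fun ψ : EuclideanSpace ℂ (Fin N) =>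
      (starRingEnd ℂ) ((negC i ψ) i) * (negC i ψ) k)
      = fun ψ => -((starRingEnd ℂ) (ψ i) * ψ k) from funext hpt] at key
  rw [integral_neg] at key
  linear_combination (-1/2 : ℂ) * key

lemma mom_diag (hN : 1 ≤ N) (hsphere : ∀ᵐ ψ ∂𝒥, ‖ψ‖ = 1)
    (hinv : ∀ R : EuclideanSpace ℂ (Fin N) ≃ₗᵢ[ℂ] EuclideanSpace ℂ (Fin N),
      Measure.map R 𝒥 = 𝒥) (i : Fin N) :
    ∫ ψ, (starRingEnd ℂ) (ψ i) * ψ i ∂𝒥 = ((N : ℂ))⁻¹ := by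
  set r : Fin N → ℝ := fun k => ∫ ψ, ‖ψ k‖ ^ 2 ∂𝒥 with hr
  have hmeas : ∀ k : Fin N, Measurable fun ψ : EuclideanSpace ℂ (Fin N) =>
      ‖ψ k‖ ^ 2 := fun k =>
    ((continuous_norm.measurable.comp (coord_meas k)).pow_const 2)
  have hint : ∀ k : Fin N, Integrable
      (fun ψ : EuclideanSpace ℂ (Fin N) => ‖ψ k‖ ^ 2) 𝒥 := by
    intro k
    refine Integrable.mono' (integrable_const (1 : ℝ)) (hmeas k).aestronglyMeasurable ?_
    filter_upwards [coord_bound 𝒥 hsphere] with ψ hψ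
    have h1 := hψ k
    have h0 := norm_nonneg (ψ k)
    rw [Real.norm_eq_abs, abs_of_nonneg (by positivity)]
    nlinarith
  have hreq : ∀ k : Fin N, r k = r i := by
    intro k
    have key := integral_comp_iso 𝒥 hinv (permC (Equiv.swap i k))
      (fun ψ => ‖ψ i‖ ^ 2) (hmeas i).aestronglyMeasurable
    have : (fun ψ : EuclideanSpace ℂ (Fin N) =>
        ‖(permC (Equiv.swap i k) ψ) i‖ ^ 2)
        = fun ψ => ‖ψ k‖ ^ 2 := by
      funext ψ; rw [permC_apply, Equiv.swap_apply_left]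
    rw [this] at key
    exact key
  have hsum : ∑ k, r k = 1 := by
    have h1 : ∑ k, r k = ∫ ψ, ∑ k, ‖ψ k‖ ^ 2 ∂𝒥 :=
      (integral_finset_sum Finset.univ (fun k _ => hint k)).symm
    rw [h1]
    have h2 : ∀ᵐ ψ ∂𝒥, (∑ k, ‖ψ k‖ ^ 2) = (1 : ℝ) := by
      filter_upwards [hsphere] with ψ hψ
      have : ‖ψ‖ ^ 2 = ∑ k, ‖ψ k‖ ^ 2 := by
        rw [EuclideanSpace.norm_eq, Real.sq_sqrt (by positivity)]
      rw [← this, hψ]; norm_num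
    rw [integral_congr_ae h2]
    simp
  have hri : r i = (N : ℝ)⁻¹ := by
    have : ∑ k : Fin N, r k = N * r i := by
      rw [Finset.sum_congr rfl (fun k _ => hreq k)]
      simp [Finset.sum_const, mul_comm]
    rw [this] at hsum
    field_simp
    linarith
  have hconv : ∫ ψ, (starRingEnd ℂ) (ψ i) * ψ i ∂𝒥
      = ∫ ψ, ((‖ψ i‖ ^ 2 : ℝ) : ℂ) ∂𝒥 := by
    congr 1; funext ψ
    rw [Complex.sq_norm, Complex.normSq_eq_conj_mul_self]
  rw [hconv,
    show (∫ ψ, ((‖ψ i‖ ^ 2 : ℝ) : ℂ) ∂𝒥)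
      = ((∫ ψ, ‖ψ i‖ ^ 2 ∂𝒥 : ℝ) : ℂ) from integral_ofReal,
    show (∫ ψ, ‖ψ i‖ ^ 2 ∂𝒥) = (N : ℝ)⁻¹ from hri]
  push_cast
  ring

lemma mulVec_cont {N : ℕ} (A : Matrix (Fin N) (Fin N) ℂ) (j : Fin N) :
    Continuous fun ψ : EuclideanSpace ℂ (Fin N) => A.mulVec (fun i => ψ i) j := by
  simp only [Matrix.mulVec, dotProduct]
  fun_prop

lemma mulVec_sq_integrable (hsphere : ∀ᵐ ψ ∂𝒥, ‖ψ‖ = 1)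
    (A : Matrix (Fin N) (Fin N) ℂ) (j : Fin N) :
    Integrable (fun ψ : EuclideanSpace ℂ (Fin N) =>
      ‖A.mulVec (fun i => ψ i) j‖ ^ 2) 𝒥 := by
  refine Integrable.mono' (integrable_const ((∑ i, ‖A j i‖) ^ 2))
    ((continuous_norm.comp (mulVec_cont A j)).pow 2).measurable.aestronglyMeasurable ?_
  filter_upwards [coord_bound 𝒥 hsphere] with ψ hψ
  rw [Real.norm_eq_abs, abs_of_nonneg (by positivity)]
  have h1 : ‖A.mulVec (fun i => ψ i) j‖ ≤ ∑ i, ‖A j i‖ := by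
    calc ‖A.mulVec (fun i => ψ i) j‖
        ≤ ∑ i, ‖A j i * ψ i‖ := by
          simp only [Matrix.mulVec, dotProduct]
          exact norm_sum_le _ _
      _ ≤ ∑ i, ‖A j i‖ := by
          refine Finset.sum_le_sum fun i _ => ?_
          rw [norm_mul]
          exact mul_le_of_le_one_right (norm_nonneg _) (hψ i)
  exact pow_le_pow_left₀ (norm_nonneg _) h1 2

lemma mulVec_sq_integral (hN : 1 ≤ N) (hsphere : ∀ᵐ ψ ∂𝒥, ‖ψ‖ = 1)
    (hinv : ∀ R : EuclideanSpace ℂ (Fin N) ≃ₗᵢ[ℂ] EuclideanSpace ℂ (Fin N),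
      Measure.map R 𝒥 = 𝒥)
    (A : Matrix (Fin N) (Fin N) ℂ) (j : Fin N) :
    ∫ ψ, ‖A.mulVec (fun i => ψ i) j‖ ^ 2 ∂𝒥
      = (∑ i, ‖A j i‖ ^ 2) / N := by
  have hpt : ∀ ψ : EuclideanSpace ℂ (Fin N),
      ((‖A.mulVec (fun i => ψ i) j‖ ^ 2 : ℝ) : ℂ)
        = ∑ i, ∑ k, (starRingEnd ℂ (A j i) * A j k) * (starRingEnd ℂ (ψ i) * ψ k) := by
    intro ψ
    rw [Complex.sq_norm, Complex.normSq_eq_conj_mul_self]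
    simp only [Matrix.mulVec, dotProduct, map_sum, _root_.map_mul]
    rw [Finset.sum_mul_sum]
    exact Finset.sum_congr rfl fun i _ => Finset.sum_congr rfl fun k _ => by ring
  have hC : ∫ ψ, ((‖A.mulVec (fun i => ψ i) j‖ ^ 2 : ℝ) : ℂ) ∂𝒥
      = ((∑ i, ‖A j i‖ ^ 2 : ℝ) : ℂ) / N := by
    rw [show (fun ψ : EuclideanSpace ℂ (Fin N) =>
      ((‖A.mulVec (fun i => ψ i) j‖ ^ 2 : ℝ) : ℂ))
      = fun ψ => ∑ i, ∑ k, (starRingEnd ℂ (A j i) * A j k) * (starRingEnd ℂ (ψ i) * ψ k)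
      from funext hpt]
    rw [integral_finset_sum _ (fun i _ => integrable_finset_sum _ (fun k _ =>
      (mom_integrable 𝒥 hsphere i k).const_mul _))]
    have step : ∀ i : Fin N,
        ∫ ψ, ∑ k, (starRingEnd ℂ (A j i) * A j k) * (starRingEnd ℂ (ψ i) * ψ k) ∂𝒥
          = ((‖A j i‖ ^ 2 : ℝ) : ℂ) * ((N : ℂ))⁻¹ := by
      intro i
      rw [integral_finset_sum _ (fun k _ => (mom_integrable 𝒥 hsphere i k).const_mul _)]
      have : ∀ k : Fin N, ∫ ψ, (starRingEnd ℂ (A j i) * A j k) * (starRingEnd ℂ (ψ i) * ψ k) ∂𝒥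
          = (starRingEnd ℂ (A j i) * A j k) * ∫ ψ, (starRingEnd ℂ (ψ i) * ψ k) ∂𝒥 :=
        fun k => integral_const_mul _ _
      rw [Finset.sum_congr rfl fun k _ => this k]
      rw [Finset.sum_eq_single i]
      · rw [mom_diag 𝒥 hN hsphere hinv i]
        congr 1
        rw [Complex.sq_norm, Complex.normSq_eq_conj_mul_self]
      · intro k _ hk
        rw [mom_offdiag 𝒥 hinv i k (Ne.symm hk), mul_zero]
      · intro h; exact absurd (Finset.mem_univ i) h
    rw [Finset.sum_congr rfl fun i _ => step i, ← Finset.sum_mul]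
    rw [div_eq_mul_inv]
    congr 1
    push_cast
    rfl
  have := hC
  rw [show (∫ ψ, ((‖A.mulVec (fun i => ψ i) j‖ ^ 2 : ℝ) : ℂ) ∂𝒥)
    = ((∫ ψ, ‖A.mulVec (fun i => ψ i) j‖ ^ 2 ∂𝒥 : ℝ) : ℂ)
    from integral_ofReal] at this
  have h2 : (((∑ i, ‖A j i‖ ^ 2 : ℝ) : ℂ)) / (N : ℂ)
      = (((∑ i, ‖A j i‖ ^ 2) / N : ℝ) : ℂ) := by push_cast; ring
  rw [h2] at this
  exact_mod_cast this

end moments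

lemma norm_symm_sq {N : ℕ} (w : Fin N → ℂ) :
    ‖(WithLp.equiv 2 (Fin N → ℂ)).symm w‖ ^ 2 = ∑ j, ‖w j‖ ^ 2 := by
  rw [EuclideanSpace.norm_eq, Real.sq_sqrt (by positivity)]
  rfl

lemma inner_symm {N : ℕ} (w₁ w₂ : Fin N → ℂ) :
    (inner ℂ ((WithLp.equiv 2 (Fin N → ℂ)).symm w₁)
      ((WithLp.equiv 2 (Fin N → ℂ)).symm w₂) : ℂ)
      = ∑ j, (starRingEnd ℂ) (w₁ j) * w₂ j := by
  rw [PiLp.inner_apply]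
  exact Finset.sum_congr rfl fun j _ => by rw [RCLike.inner_apply]; exact mul_comm _ _

lemma norm_sub_symm {N : ℕ} (w₁ w₂ : Fin N → ℂ) :
    ‖(WithLp.equiv 2 (Fin N → ℂ)).symm w₁ - (WithLp.equiv 2 (Fin N → ℂ)).symm w₂‖ ^ 2
      = ∑ j, ‖w₁ j - w₂ j‖ ^ 2 := by
  rw [EuclideanSpace.norm_eq, Real.sq_sqrt (by positivity)]
  refine Finset.sum_congr rfl fun j _ => ?_
  rw [show ((WithLp.equiv 2 (Fin N → ℂ)).symm w₁ - (WithLp.equiv 2 (Fin N → ℂ)).symm w₂) j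
    = w₁ j - w₂ j from rfl]

lemma key_dot {N : ℕ} (U V : Matrix (Fin N) (Fin N) ℂ) (v : Fin N → ℂ) :
    ∑ j, (starRingEnd ℂ) (U.mulVec v j) * (V.mulVec v j)
      = dotProduct (star v) ((Uᴴ * V).mulVec v) := by
  rw [← Matrix.mulVec_mulVec, dotProduct_mulVec, ← Matrix.star_mulVec]
  simp [dotProduct]

lemma ofReal_sum_abs_sq {n : ℕ} (w : Fin n → ℂ) :
    ((∑ j, ‖w j‖ ^ 2 : ℝ) : ℂ) = ∑ j, (starRingEnd ℂ) (w j) * (w j) := by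
  push_cast
  refine Finset.sum_congr rfl fun j _ => ?_
  rw [← Complex.ofReal_pow, Complex.sq_norm, Complex.normSq_eq_conj_mul_self]

lemma unitary_mulVec_sum {N : ℕ} (U : Matrix (Fin N) (Fin N) ℂ)
    (hU : U ∈ Matrix.unitaryGroup (Fin N) ℂ) (v : Fin N → ℂ) :
    ∑ j, ‖U.mulVec v j‖ ^ 2 = ∑ i, ‖v i‖ ^ 2 := by
  have h1 : Uᴴ * U = 1 := by
    rw [← Matrix.star_eq_conjTranspose]
    exact hU.1
  have h2 := key_dot U U v
  rw [h1, Matrix.one_mulVec] at h2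
  have h3 : dotProduct (star v) v = ∑ i, (starRingEnd ℂ) (v i) * (v i) := by
    simp [dotProduct]
  rw [h3] at h2
  have := (ofReal_sum_abs_sq (fun j => U.mulVec v j)).trans
    (h2.trans (ofReal_sum_abs_sq v).symm)
  exact_mod_cast this

lemma sphere_bounds {N : ℕ} (U₁ U₂ : Matrix (Fin N) (Fin N) ℂ)
    (h₁ : U₁ ∈ Matrix.unitaryGroup (Fin N) ℂ)
    (h₂ : U₂ ∈ Matrix.unitaryGroup (Fin N) ℂ)
    (v : Fin N → ℂ) (hnv : ∑ i, ‖v i‖ ^ 2 = 1) :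
    ‖∑ j, (starRingEnd ℂ) (U₁.mulVec v j) * U₂.mulVec v j‖ ≤ 1 ∧
    1 - ‖∑ j, (starRingEnd ℂ) (U₁.mulVec v j) * U₂.mulVec v j‖ ^ 2
      ≤ ∑ j, ‖(U₁ - U₂).mulVec v j‖ ^ 2 := by
  set x : EuclideanSpace ℂ (Fin N) := (WithLp.equiv 2 (Fin N → ℂ)).symm (U₁.mulVec v) with hx
  set y : EuclideanSpace ℂ (Fin N) := (WithLp.equiv 2 (Fin N → ℂ)).symm (U₂.mulVec v) with hy
  have hxnorm : ‖x‖ = 1 := by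
    have h1 : ‖x‖ ^ 2 = 1 := by
      rw [hx, norm_symm_sq, unitary_mulVec_sum U₁ h₁ v, hnv]
    nlinarith [norm_nonneg x]
  have hynorm : ‖y‖ = 1 := by
    have h1 : ‖y‖ ^ 2 = 1 := by
      rw [hy, norm_symm_sq, unitary_mulVec_sum U₂ h₂ v, hnv]
    nlinarith [norm_nonneg y]
  set z : ℂ := ∑ j, (starRingEnd ℂ) (U₁.mulVec v j) * U₂.mulVec v j with hz
  have hzinner : (inner ℂ x y : ℂ) = z := by rw [hx, hy, inner_symm, hz]
  have hzle : ‖z‖ ≤ 1 := by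
    rw [← hzinner]
    calc ‖(inner ℂ x y : ℂ)‖ ≤ ‖x‖ * ‖y‖ := norm_inner_le_norm x y
      _ = 1 := by rw [hxnorm, hynorm]; ring
  refine ⟨hzle, ?_⟩
  have hgψ : ∑ j, ‖(U₁ - U₂).mulVec v j‖ ^ 2 = 2 - 2 * z.re := by
    have h1 : ∑ j, ‖(U₁ - U₂).mulVec v j‖ ^ 2 = ‖x - y‖ ^ 2 := by
      rw [hx, hy, norm_sub_symm]
      refine Finset.sum_congr rfl fun j _ => ?_
      rw [Matrix.sub_mulVec]
      rfl
    rw [h1, @norm_sub_sq ℂ _ _ _ _ x y, hzinner, hxnorm, hynorm]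
    simp [RCLike.re_to_complex]
    ring
  rw [hgψ]
  nlinarith [Complex.re_le_norm z, norm_nonneg z]

set_option maxHeartbeats 1000000 in
/-- Let `U₁, U₂` be unitary, `F(ψ) = |⟨U₁ψ, U₂ψ⟩|²`, and let `𝒥` be the
uniform (rotation invariant) probability measure on the unit sphere of `ℂ^N`.  Then
`∫ F² d𝒥 − (∫ F d𝒥)² ≤ 2‖U₁ − U₂‖_{S₂}²`. -/
theorem stmt_13 (N : ℕ) (hN : 1 ≤ N) (U₁ U₂ : Matrix (Fin N) (Fin N) ℂ)
    (h₁ : U₁ ∈ Matrix.unitaryGroup (Fin N) ℂ)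
    (h₂ : U₂ ∈ Matrix.unitaryGroup (Fin N) ℂ)
    [MeasurableSpace (EuclideanSpace ℂ (Fin N))]
    [BorelSpace (EuclideanSpace ℂ (Fin N))]
    (𝒥 : Measure (EuclideanSpace ℂ (Fin N))) [IsProbabilityMeasure 𝒥]
    (hsphere : ∀ᵐ ψ ∂𝒥, ‖ψ‖ = 1)
    (hinv : ∀ R : EuclideanSpace ℂ (Fin N) ≃ₗᵢ[ℂ] EuclideanSpace ℂ (Fin N),
      Measure.map R 𝒥 = 𝒥)
    (F : EuclideanSpace ℂ (Fin N) → ℝ)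
    (hF : ∀ ψ, F ψ = ‖∑ j, (starRingEnd ℂ) (U₁.mulVec (fun i => ψ i) j) *
      U₂.mulVec (fun i => ψ i) j‖ ^ 2) :
    (∫ ψ, F ψ ^ 2 ∂𝒥) - (∫ ψ, F ψ ∂𝒥) ^ 2 ≤ 2 * schattenTwo (U₁ - U₂) ^ 2 := by
  set A : Matrix (Fin N) (Fin N) ℂ := U₁ - U₂ with hA
  set g : EuclideanSpace ℂ (Fin N) → ℝ :=
    fun ψ => ∑ j, ‖A.mulVec (fun i => ψ i) j‖ ^ 2 with hg
  -- trace formula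
  have htr : (A * Aᴴ).trace.re = ∑ j, ∑ i, ‖A j i‖ ^ 2 := by
    rw [Matrix.trace]
    simp only [Matrix.diag, Matrix.mul_apply, Matrix.conjTranspose_apply]
    rw [Complex.re_sum]
    refine Finset.sum_congr rfl fun j _ => ?_
    rw [Complex.re_sum]
    refine Finset.sum_congr rfl fun i _ => ?_
    rw [show star (A j i) = (starRingEnd ℂ) (A j i) from rfl, Complex.mul_conj,
      Complex.ofReal_re, Complex.normSq_eq_norm_sq]
  have htr0 : 0 ≤ (A * Aᴴ).trace.re / N := by
    rw [htr]; positivity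
  have hschatten : schattenTwo A ^ 2 = (A * Aᴴ).trace.re / N :=
    Real.sq_sqrt htr0
  -- integral of g
  have hgint : Integrable g 𝒥 :=
    integrable_finset_sum _ fun j _ => mulVec_sq_integrable 𝒥 hsphere A j
  have hEg : ∫ ψ, g ψ ∂𝒥 = (A * Aᴴ).trace.re / N := by
    rw [hg]
    rw [integral_finset_sum _ fun j _ => mulVec_sq_integrable 𝒥 hsphere A j]
    rw [Finset.sum_congr rfl fun j _ => mulVec_sq_integral 𝒥 hN hsphere hinv A j]
    rw [htr, ← Finset.sum_div]
  -- measurability of F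
  have hFeq : F = fun ψ => ‖∑ j, (starRingEnd ℂ) (U₁.mulVec (fun i => ψ i) j) *
      U₂.mulVec (fun i => ψ i) j‖ ^ 2 := funext hF
  have hFcont : Continuous F := by
    rw [hFeq]
    exact (continuous_norm.comp (continuous_finset_sum _ fun j _ =>
      ((continuous_star.comp (mulVec_cont U₁ j)).mul (mulVec_cont U₂ j)))).pow 2
  -- pointwise facts on the sphere
  have hae : ∀ᵐ ψ ∂𝒥, 0 ≤ F ψ ∧ F ψ ≤ 1 ∧ 1 - F ψ ≤ g ψ := by
    filter_upwards [hsphere] with ψ hψ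
    have hnv : ∑ i, ‖ψ i‖ ^ 2 = 1 := by
      have h0 := norm_symm_sq (N := N) (fun i => ψ i)
      rw [show (WithLp.equiv 2 (Fin N → ℂ)).symm (fun i => ψ i) = ψ from rfl, hψ] at h0
      simpa using h0.symm
    obtain ⟨hb1, hb2⟩ := sphere_bounds U₁ U₂ h₁ h₂ (fun i => ψ i) hnv
    refine ⟨?_, ?_, ?_⟩
    · rw [hF ψ]; positivity
    · rw [hF ψ]; exact pow_le_one₀ (norm_nonneg _) hb1
    · rw [hF ψ]; exact hb2
  -- integrability of F, F², (1-F)²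
  have hFint : Integrable F 𝒥 := by
    refine Integrable.mono' (integrable_const (1 : ℝ))
      hFcont.measurable.aestronglyMeasurable ?_
    filter_upwards [hae] with ψ hψ
    rw [Real.norm_eq_abs, abs_of_nonneg hψ.1]; exact hψ.2.1
  have hF2int : Integrable (fun ψ => F ψ ^ 2) 𝒥 := by
    refine Integrable.mono' (integrable_const (1 : ℝ))
      (hFcont.pow 2).measurable.aestronglyMeasurable ?_
    filter_upwards [hae] with ψ hψ
    rw [Real.norm_eq_abs, abs_of_nonneg (by positivity)]
    nlinarith [hψ.1, hψ.2.1]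
  have h1Fint : Integrable (fun ψ => 1 - F ψ) 𝒥 := (integrable_const 1).sub hFint
  have h1F2int : Integrable (fun ψ => (1 - F ψ) ^ 2) 𝒥 := by
    refine Integrable.mono' (integrable_const (1 : ℝ))
      ((continuous_const.sub hFcont).pow 2).measurable.aestronglyMeasurable ?_
    filter_upwards [hae] with ψ hψ
    rw [Real.norm_eq_abs, abs_of_nonneg (by positivity)]
    nlinarith [hψ.1, hψ.2.1]
  -- the four inequalities
  have e1 : ∫ ψ, (1 - F ψ) ^ 2 ∂𝒥 = (∫ ψ, F ψ ^ 2 ∂𝒥) - 2 * (∫ ψ, F ψ ∂𝒥) + 1 := by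
    have : (fun ψ => (1 - F ψ) ^ 2) = fun ψ => F ψ ^ 2 - 2 * F ψ + 1 :=
      funext fun ψ => by ring
    have i1 : Integrable (fun ψ => F ψ ^ 2 - 2 * F ψ) 𝒥 := hF2int.sub (hFint.const_mul 2)
    have i2 : Integrable (fun ψ => 2 * F ψ) 𝒥 := hFint.const_mul 2
    rw [this, integral_add i1 (integrable_const 1),
      integral_sub hF2int i2, integral_const_mul, integral_const]
    simp
  have e2 : ∫ ψ, (1 - F ψ) ∂𝒥 = 1 - ∫ ψ, F ψ ∂𝒥 := by
    rw [integral_sub (integrable_const 1) hFint, integral_const]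
    simp
  have e3 : ∫ ψ, (1 - F ψ) ^ 2 ∂𝒥 ≤ ∫ ψ, (1 - F ψ) ∂𝒥 := by
    refine integral_mono_ae h1F2int h1Fint ?_
    filter_upwards [hae] with ψ hψ
    nlinarith [hψ.1, hψ.2.1]
  have e4 : ∫ ψ, (1 - F ψ) ∂𝒥 ≤ ∫ ψ, g ψ ∂𝒥 := by
    refine integral_mono_ae h1Fint hgint ?_
    filter_upwards [hae] with ψ hψ
    exact hψ.2.2
  rw [hschatten, ← hEg]
  set a := ∫ ψ, F ψ ∂𝒥
  set b := ∫ ψ, F ψ ^ 2 ∂𝒥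
  set T := ∫ ψ, g ψ ∂𝒥
  have hT0 : 0 ≤ T := by rw [hEg]; exact htr0
  nlinarith [sq_nonneg (1 - a), e1, e2, e3, e4]
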